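/- Let N be a Nijenhuis operator on a multiplicative Hom-associative algebra (A, ·, α). Then the deformed multiplication μ_N(x,y) = N(x)·y + x·N(y) − N(x·y) is a Hom-associative multiplication on (A, α), and N is an algebra morphism from (A, μ_N, α) to (A, ·, α). -/
import Mathlib


section

variable {K A : Type*} [Field K] [AddCommGroup A] [Module K A]

/-- The deformed multiplication `μ_N(x,y) = N(x)·y + x·N(y) − N(x·y)`. -/
def muN (μ : A →ₗ[K] A →ₗ[K] A) (N : A →ₗ[K] A) (x y : A) : A :=
  μ (N x) y + μ x (N y) - N (μ x y)

/-- for a Nijenhuis operator `N` on a multiplicative Hom-associative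
algebra `(A,·,α)`, the deformed multiplication `μ_N` is Hom-associative on `(A,α)`
and `N : (A,μ_N,α) → (A,·,α)` is an algebra morphism. -/
theorem stmt_4 (μ : A →ₗ[K] A →ₗ[K] A) (α : A →ₗ[K] A) (N : A →ₗ[K] A)
    (hassoc : ∀ a b c : A, μ (α a) (μ b c) = μ (μ a b) (α c))
    (hmult : ∀ a b : A, α (μ a b) = μ (α a) (α b))
    (hNα : ∀ a, N (α a) = α (N a))
    (hNij : ∀ x y, μ (N x) (N y) = N (μ (N x) y + μ x (N y) - N (μ x y))) :
    (∀ x y z : A, muN μ N (α x) (muN μ N y z) = muN μ N (muN μ N x y) (α z)) ∧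
    (∀ x y : A, N (muN μ N x y) = μ (N x) (N y)) ∧
    (∀ x : A, N (α x) = α (N x)) := by
  refine ⟨?_, fun x y => (hNij x y).symm, hNα⟩
  intro x y z
  have e1 := hassoc (N x) (N y) z
  have e2 := hassoc (N x) y (N z)
  have e3 := hassoc x (N y) (N z)
  have e8 : μ (α x) (μ (N y) (N z)) =
      μ (α x) (N (μ (N y) z)) + μ (α x) (N (μ y (N z))) - μ (α x) (N (N (μ y z))) := by
    rw [hNij y z]; simp only [map_add, map_sub]
  have e9 : μ (μ (N x) (N y)) (α z) =
      μ (N (μ (N x) y)) (α z) + μ (N (μ x (N y))) (α z) - μ (N (N (μ x y))) (α z) := by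
    rw [hNij x y]; simp only [map_add, map_sub, LinearMap.add_apply, LinearMap.sub_apply]
  have e10 : μ (α (N x)) (N (μ y z)) =
      N (μ (α (N x)) (μ y z)) + N (μ (α x) (N (μ y z))) - N (N (μ (α x) (μ y z))) := by
    have := hNij (α x) (μ y z)
    rw [hNα] at this
    rw [this]; simp only [map_add, map_sub]
  have e11 : μ (N (μ x y)) (N (α z)) =
      N (μ (N (μ x y)) (α z)) + N (μ (μ x y) (N (α z))) - N (N (μ (μ x y) (α z))) := by
    rw [hNij (μ x y) (α z)]; simp only [map_add, map_sub]
  rw [hNα] at e11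
  have e12 := congrArg N (hassoc x (N y) z)
  have e13 : N (μ (α x) (μ y (N z))) = N (μ (μ x y) (α (N z))) := by
    rw [hassoc x y (N z)]
  have e14 : N (μ (α (N x)) (μ y z)) = N (μ (μ (N x) y) (α z)) := by
    rw [hassoc (N x) y z]
  have e15 : N (N (μ (α x) (μ y z))) = N (N (μ (μ x y) (α z))) := by
    rw [hassoc x y z]
  simp only [muN, map_add, map_sub, LinearMap.add_apply, LinearMap.sub_apply, hNα]
  linear_combination (norm := module) e1 + e2 + e3 - e8 + e9 - e10 - e14 + e11 - e12 - e13 + e15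

end
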